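/- If C ≤ R^n is a modular linear code of index r over a finite Frobenius ring R, generated by the columns g₁,...,gₙ of G ∈ R^{k×n}, then for all d ∈ R^n: Σ_{c∈C} w_hom(c)·w_hom(c+d) = |C|·(n² + rn − r·w_hom(d)). -/

import Mathlib

/-!
Write `w_hom(y) = 1 - |Rˣ|⁻¹ ∑ᵤ χ(y u)`; moving the units to the right of `y` uses the Nakayama
automorphism of the generating character `χ`. Summing the product of two such expressions over
`x ∈ R^k`, the linear terms vanish since the columns are nonzero, and the cross term of columns
`g, h` is proportional to the number of units `w` with `g = h w`. In a finite ring `gR = hR`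
forces `g ∈ hRˣ` (unit-regularity, via Lovász cancellation), so modularity of index `r` says
that for each column `h` these counts add up to `r |Rˣ|`. Summing over pairs of columns yields
`|R|^k (n² + rn − r w_hom(d))`, and every codeword has the same number of preimages `x`.
-/
open scoped Classical

/-- The normalized homogeneous weight (real-valued) defined from an additive
character. -/
noncomputable def whomR {R : Type} [Ring R] [Fintype R] (χ : AddChar R ℂ) (x : R) : ℝ :=
  (1 - (Fintype.card Rˣ : ℂ)⁻¹ * ∑ u : Rˣ, χ ((u : R) * x)).re

/-- The homogeneous weight of a word, extended additively to \`R^n\`. -/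
noncomputable def whomV {R : Type} [Ring R] [Fintype R] (χ : AddChar R ℂ)
    {n : ℕ} (c : Fin n → R) : ℝ :=
  ∑ j, whomR χ (c j)

/-- A generating character: a character of `(R,+)` whose kernel contains no
nonzero left ideal. -/
def IsGenChar {R : Type} [Ring R] [Fintype R] (χ : AddChar R ℂ) : Prop :=
  ∀ I : Ideal R, I ≠ ⊥ → ∃ x ∈ I, χ x ≠ 1

open Finset Function Matrix MulOpposite

universe u

section IdempotentPower

variable {M : Type*} [Monoid M] [Finite M]

theorem exists_isIdempotentElem_pow (p : M) : ∃ j ≠ 0, IsIdempotentElem (p ^ j) := by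
  obtain ⟨a, b, hab, heq⟩ := Finite.exists_ne_map_eq_of_infinite (fun n : ℕ => p ^ n)
  wlog hlt : a < b generalizing a b
  · exact this b a hab.symm heq.symm (by omega)
  obtain ⟨c, rfl⟩ := Nat.exists_eq_add_of_lt hlt
  have hper (l n : ℕ) : p ^ (a + n + l * (c + 1)) = p ^ (a + n) := by
    induction l with
    | zero => simp
    | succ l ih =>
      calc p ^ (a + n + (l + 1) * (c + 1)) = p ^ n * p ^ (a + c + 1) * p ^ (l * (c + 1)) := by
            rw [← pow_add, ← pow_add]; ring_nf
        _ = p ^ (a + n + l * (c + 1)) := by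
            rw [← heq, ← pow_add, ← pow_add]; ring_nf
        _ = p ^ (a + n) := ih
  refine ⟨(a + 1) * (c + 1), by positivity, ?_⟩
  have h := hper (a + 1) ((a + 1) * (c + 1) - a)
  rw [Nat.add_sub_cancel' (by nlinarith)] at h
  rw [IsIdempotentElem, ← pow_add, h]

end IdempotentPower

section Cancellation

variable {S : Type*} [Ring S] {X M : Type*} [AddCommGroup X] [Module S X]
  [AddCommGroup M] [Module S M]

instance [Finite X] [Finite M] : Finite (X →ₗ[S] M) := .of_injective _ DFunLike.coe_injective

instance [Finite X] (N : Submodule S X) : Finite (X ⧸ N) := .of_surjective _ N.mkQ_surjective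

lemma Submodule.card_quotient_lt [Finite X] {N : Submodule S X} (hN : N ≠ ⊥) :
    Nat.card (X ⧸ N) < Nat.card X := by
  have hcard := AddSubgroup.card_eq_card_quotient_mul_card_addSubgroup N.toAddSubgroup
  have hN' : 1 < Nat.card N.toAddSubgroup := by
    rw [AddSubgroup.one_lt_card_iff_ne_bot, Ne, ← Submodule.bot_toAddSubgroup (R := S),
      Submodule.toAddSubgroup_inj]
    exact hN
  have hpos : 0 < Nat.card (X ⧸ N) := Nat.card_pos
  change Nat.card X = Nat.card (X ⧸ N) * _ at hcard
  nlinarith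

def Submodule.kerFiberEquiv (N : Submodule S X) :
    {f : X →ₗ[S] M // LinearMap.ker f = N} ≃ {g : X ⧸ N →ₗ[S] M // Injective g} where
  toFun f := ⟨N.liftQ f.1 f.2.ge, by
    rw [← LinearMap.ker_eq_bot]; exact N.ker_liftQ_eq_bot _ _ f.2.le⟩
  invFun g := ⟨g.1 ∘ₗ N.mkQ, by
    rw [LinearMap.ker_comp, LinearMap.ker_eq_bot.2 g.2, Submodule.comap_bot, N.ker_mkQ]⟩
  left_inv f := Subtype.ext (N.liftQ_mkQ _ _)
  right_inv g := Subtype.ext (N.linearMap_qext rfl)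

lemma card_linearMap_eq_finsum [Finite X] [Finite M] :
    Nat.card (X →ₗ[S] M) =
      ∑ᶠ N : Submodule S X, Nat.card {g : X ⧸ N →ₗ[S] M // Injective g} := by
  have := Fintype.ofFinite (Submodule S X)
  rw [Nat.card_congr ((Equiv.sigmaFiberEquiv LinearMap.ker).symm.trans
    (Equiv.sigmaCongrRight Submodule.kerFiberEquiv)), Nat.card_sigma, finsum_eq_sum_of_fintype]

lemma LinearEquiv.card_injective_comp_eq {X' : Type*} [AddCommGroup X'] [Module S X']
    (e : X ≃ₗ[S] X') :
    Nat.card {f : X' →ₗ[S] M // Injective f} = Nat.card {f : X →ₗ[S] M // Injective f} :=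
  Nat.card_congr <| Equiv.subtypeEquiv
    ⟨(· ∘ₗ e.toLinearMap), (· ∘ₗ e.symm.toLinearMap), fun f => by ext; simp,
      fun f => by ext; simp⟩
    fun f => (EquivLike.injective_comp e f).symm

lemma card_injective_eq_of_card_linearMap_eq {B C : Type*} [AddCommGroup B] [Module S B]
    [Finite B] [AddCommGroup C] [Module S C] [Finite C]
    (h : ∀ (X : Type u) [AddCommGroup X] [Module S X] [Finite X],
      Nat.card (X →ₗ[S] B) = Nat.card (X →ₗ[S] C))
    (X : Type u) [AddCommGroup X] [Module S X] [Finite X] :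
    Nat.card {f : X →ₗ[S] B // Injective f} = Nat.card {f : X →ₗ[S] C // Injective f} := by
  induction hn : Nat.card X using Nat.strong_induction_on generalizing X with
  | _ n ih =>
    have := Fintype.ofFinite (Submodule S X)
    have key := h X
    simp only [card_linearMap_eq_finsum, finsum_eq_sum_of_fintype,
      ← add_sum_erase _ _ (mem_univ (⊥ : Submodule S X))] at key
    have hquot : ∑ N ∈ univ.erase (⊥ : Submodule S X),
          Nat.card {g : X ⧸ N →ₗ[S] B // Injective g} =
        ∑ N ∈ univ.erase (⊥ : Submodule S X), Nat.card {g : X ⧸ N →ₗ[S] C // Injective g} :=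
      sum_congr rfl fun N hN =>
        ih _ (hn ▸ Submodule.card_quotient_lt (ne_of_mem_erase hN)) (X ⧸ N) rfl
    rw [hquot, add_left_inj] at key
    simpa only [(Submodule.quotEquivOfEqBot (⊥ : Submodule S X) rfl).card_injective_comp_eq]
      using key

lemma card_linearMap_prod (X A B : Type*) [AddCommGroup X] [Module S X] [AddCommGroup A]
    [Module S A] [AddCommGroup B] [Module S B] :
    Nat.card (X →ₗ[S] A × B) = Nat.card (X →ₗ[S] A) * Nat.card (X →ₗ[S] B) := by
  rw [← Nat.card_prod, Nat.card_congr (LinearMap.prodEquiv ℕ).toEquiv]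

/-- Lovász cancellation for finite modules. -/
theorem nonempty_linearEquiv_cancel_left {A B C : Type u} [AddCommGroup A] [Module S A]
    [Finite A] [AddCommGroup B] [Module S B] [Finite B] [AddCommGroup C] [Module S C] [Finite C]
    (e : (A × B) ≃ₗ[S] (A × C)) : Nonempty (B ≃ₗ[S] C) := by
  have hhom (X : Type u) [AddCommGroup X] [Module S X] [Finite X] :
      Nat.card (X →ₗ[S] B) = Nat.card (X →ₗ[S] C) := by
    have h : Nat.card (X →ₗ[S] A × B) = Nat.card (X →ₗ[S] A × C) :=
      Nat.card_congr ⟨(e.toLinearMap ∘ₗ ·), (e.symm.toLinearMap ∘ₗ ·),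
        fun f => by ext <;> simp, fun f => by ext <;> simp⟩
    rw [card_linearMap_prod, card_linearMap_prod] at h
    exact Nat.eq_of_mul_eq_mul_left Nat.card_pos h
  obtain ⟨f, hf⟩ : Nonempty {f : B →ₗ[S] C // Injective f} :=
    (Nat.card_pos_iff.1 (card_injective_eq_of_card_linearMap_eq hhom B ▸
      Nat.card_pos_iff.2 ⟨⟨⟨.id, injective_id⟩⟩, inferInstance⟩)).1
  have hcard : Nat.card B = Nat.card C := by
    have h := Nat.card_congr e.toEquiv
    rw [Nat.card_prod, Nat.card_prod] at h
    exact Nat.eq_of_mul_eq_mul_left Nat.card_pos h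
  exact ⟨.ofBijective f ((Nat.bijective_iff_injective_and_card f).2 ⟨hf, hcard⟩)⟩

end Cancellation

section UnitRegular

variable {R : Type*} [Ring R]

lemma IsIdempotentElem.mem_span_op_singleton_iff {e x : R} (he : IsIdempotentElem e) :
    x ∈ Rᵐᵒᵖ ∙ e ↔ e * x = x := by
  rw [Submodule.mem_span_singleton]
  constructor
  · rintro ⟨a, rfl⟩
    rw [smul_eq_mul_unop, ← mul_assoc, he.eq]
  · exact fun h => ⟨op x, by rw [smul_eq_mul_unop, unop_op, h]⟩

lemma IsIdempotentElem.isCompl_span_op {e : R} (he : IsIdempotentElem e) :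
    IsCompl (Rᵐᵒᵖ ∙ e) (Rᵐᵒᵖ ∙ (1 - e)) := by
  constructor
  · rw [Submodule.disjoint_def]
    intro x hx hx'
    rw [he.mem_span_op_singleton_iff] at hx
    rw [he.one_sub.mem_span_op_singleton_iff, sub_mul, one_mul, hx, sub_self] at hx'
    exact hx'.symm
  · rw [codisjoint_iff, Submodule.eq_top_iff']
    intro x
    refine Submodule.mem_sup.2 ⟨e * x, ?_, (1 - e) * x, ?_, by noncomm_ring⟩
    · rw [he.mem_span_op_singleton_iff, ← mul_assoc, he.eq]
    · rw [he.one_sub.mem_span_op_singleton_iff, ← mul_assoc, he.one_sub.eq]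

lemma isIdempotentElem_mul_of_mul_mul_eq {a b : R} (hab : a * b * a = a) :
    IsIdempotentElem (a * b) := by
  rw [IsIdempotentElem, ← mul_assoc, hab]

lemma isIdempotentElem_mul_of_mul_mul_eq' {a b : R} (hab : a * b * a = a) :
    IsIdempotentElem (b * a) := by
  rw [IsIdempotentElem, mul_assoc, ← mul_assoc a, hab]

def spanMulEquivOfMulMulEq {a b : R} (hab : a * b * a = a) :
    (Rᵐᵒᵖ ∙ (b * a)) ≃ₗ[Rᵐᵒᵖ] (Rᵐᵒᵖ ∙ (a * b)) :=
  have he := isIdempotentElem_mul_of_mul_mul_eq' hab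
  have hf := isIdempotentElem_mul_of_mul_mul_eq hab
  LinearEquiv.ofLinearMap
    ((DistribSMul.toLinearMap Rᵐᵒᵖ R a).restrict fun x hx => by
      rw [he.mem_span_op_singleton_iff] at hx
      rw [hf.mem_span_op_singleton_iff, DistribSMul.toLinearMap_apply, smul_eq_mul,
        ← mul_assoc, hab])
    ((DistribSMul.toLinearMap Rᵐᵒᵖ R b).restrict fun y hy => by
      rw [hf.mem_span_op_singleton_iff] at hy
      rw [he.mem_span_op_singleton_iff, DistribSMul.toLinearMap_apply, smul_eq_mul,
        ← mul_assoc, mul_assoc b, mul_assoc b, hy])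
    (by
      ext ⟨y, hy⟩
      rw [hf.mem_span_op_singleton_iff] at hy
      simp [← mul_assoc, hy])
    (by
      ext ⟨x, hx⟩
      rw [he.mem_span_op_singleton_iff] at hx
      simp [← mul_assoc, hx])

/-- The unit is `a + δ`, where `δ` maps `(1 - ba)R` isomorphically onto `(1 - ab)R`; such an
isomorphism exists by Lovász cancellation, as these are complements of `baR ≅ abR`. -/
theorem exists_unit_mul_mul_eq_of_mul_mul_eq [Finite R] {a b : R} (hab : a * b * a = a) :
    ∃ u : Rˣ, a * b * u = a := by
  have he := isIdempotentElem_mul_of_mul_mul_eq' hab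
  have hf := isIdempotentElem_mul_of_mul_mul_eq hab
  obtain ⟨γ⟩ := nonempty_linearEquiv_cancel_left
    (((Submodule.prodEquivOfIsCompl _ _ he.isCompl_span_op).trans
      (Submodule.prodEquivOfIsCompl _ _ hf.isCompl_span_op).symm).trans
      ((spanMulEquivOfMulMulEq hab).symm.prodCongr (LinearEquiv.refl _ _)))
  set v : Rᵐᵒᵖ ∙ (1 - b * a) := ⟨1 - b * a, Submodule.mem_span_singleton_self _⟩
  set δ : R := ↑(γ v)
  have hγ (y : R) : (γ (op y • v) : R) = δ * y := by
    rw [map_smul, Submodule.coe_smul, smul_eq_mul_unop, unop_op]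
  have hfδ : a * b * δ = 0 := by
    have hδ := (hf.one_sub.mem_span_op_singleton_iff (x := δ)).1 (γ _).2
    rw [← hδ, ← mul_assoc, mul_sub, mul_one, hf.eq, sub_self, zero_mul]
  have hfu : a * b * (a + δ) = a := by rw [mul_add, hab, hfδ, add_zero]
  have hunit : IsUnit (a + δ) := by
    refine (isLeftRegular_iff_right_eq_zero_of_mul.2 fun x hx => ?_).isUnit_of_finite
    have hax : a * x = 0 := by rw [← hfu, mul_assoc, hx, mul_zero]
    have hδx : δ * x = 0 := by rwa [add_mul, hax, zero_add] at hx
    have hex : b * a * x = 0 := by rw [mul_assoc, hax, mul_zero]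
    have hex' : (1 - b * a) * x = 0 := by
      rw [← hγ, ZeroMemClass.coe_eq_zero, LinearEquiv.map_eq_zero_iff] at hδx
      simpa [v, smul_eq_mul_unop] using congrArg Subtype.val hδx
    rwa [sub_mul, one_mul, hex, sub_zero] at hex'
  exact ⟨hunit.unit, hfu⟩

/-- Apply unit-regularity to `a = f s`, where `f` is an idempotent power of `s b`; `f` still
fixes `h`. -/
theorem exists_unit_mul_eq_mul_of_mul_mul_eq [Finite R] {ι : Type*} {h : ι → R} {s b : R}
    (hsb : ∀ i, h i * (s * b) = h i) : ∃ u : Rˣ, ∀ i, h i * u = h i * s := by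
  obtain ⟨j, hj, hidem⟩ := exists_isIdempotentElem_pow (s * b)
  obtain ⟨j, rfl⟩ := Nat.exists_eq_succ_of_ne_zero hj
  set f := (s * b) ^ (j + 1)
  have hhf (i) : h i * f = h i := by
    have (n : ℕ) : h i * (s * b) ^ n = h i := by
      induction n with
      | zero => rw [pow_zero, mul_one]
      | succ n ih => rw [pow_succ, ← mul_assoc, ih, hsb]
    exact this _
  have hab : f * s * (b * (s * b) ^ j * f) = f := by
    calc f * s * (b * (s * b) ^ j * f) = f * ((s * b) ^ (j + 1) * f) := by
          rw [pow_succ' (s * b) j]; noncomm_ring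
      _ = f := by rw [hidem.eq, hidem.eq]
  obtain ⟨u, hu⟩ := exists_unit_mul_mul_eq_of_mul_mul_eq (a := f * s)
    (b := b * (s * b) ^ j * f) (by rw [hab, ← mul_assoc, hidem.eq])
  refine ⟨u, fun i => ?_⟩
  rw [hab] at hu
  rw [← hhf i, mul_assoc, hu, ← mul_assoc, hhf]

theorem setOf_mul_eq_iff {ι : Type*} [Finite R] {g h : ι → R} :
    {v : ι → R | ∃ t : R, v = fun i => g i * t} = {v | ∃ t : R, v = fun i => h i * t} ↔
      ∃ u : Rˣ, g = fun i => h i * u := by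
  constructor
  · intro H
    have hg : g ∈ {v : ι → R | ∃ t : R, v = fun i => g i * t} := ⟨1, by simp⟩
    have hh : h ∈ {v : ι → R | ∃ t : R, v = fun i => h i * t} := ⟨1, by simp⟩
    rw [H] at hg
    rw [← H] at hh
    obtain ⟨s, hs⟩ := hg
    obtain ⟨b, hb⟩ := hh
    obtain ⟨u, hu⟩ := exists_unit_mul_eq_mul_of_mul_mul_eq (h := h) (s := s) (b := b)
      fun i => by rw [← mul_assoc, ← congrFun hs i, ← congrFun hb i]
    exact ⟨u, funext fun i => by rw [hu, congrFun hs i]⟩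
  · rintro ⟨u, rfl⟩
    ext v
    constructor
    · rintro ⟨t, rfl⟩
      exact ⟨u * t, by simp [mul_assoc]⟩
    · rintro ⟨t, rfl⟩
      exact ⟨↑u⁻¹ * t, by simp [mul_assoc]⟩

end UnitRegular

section UnitMultiples

variable {R : Type*} [Ring R] [Fintype R] {ι : Type*} [Fintype ι]

omit [Fintype R] in
lemma Units.mul_add_mul_eq_zero_iff (a c : R) (u v : Rˣ) :
    a * u + c * v = 0 ↔ a = c * ↑(-v * u⁻¹) := by
  rw [Units.val_mul, ← mul_assoc, Units.eq_mul_inv_iff_mul_eq, Units.val_neg, mul_neg,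
    eq_neg_iff_add_eq_zero]

lemma card_filter_mul_add_mul_eq_zero (g h : ι → R) (v : Rˣ) :
    #{u : Rˣ | (fun i => g i * u + h i * v) = 0} = #{w : Rˣ | g = fun i => h i * w} := by
  refine card_nbij' (fun u => -v * u⁻¹) (fun w => -(w⁻¹ * v)) ?_ ?_
    (fun u _ => by simp) (fun w _ => by simp)
  · intro u hu
    simp only [coe_filter, mem_univ, true_and, funext_iff, Pi.zero_apply,
      Units.mul_add_mul_eq_zero_iff] at hu ⊢
    exact hu
  · intro w hw
    simp only [coe_filter, mem_univ, true_and, funext_iff, Pi.zero_apply,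
      Units.mul_add_mul_eq_zero_iff] at hw ⊢
    intro i
    rw [hw i]
    simp

lemma card_filter_eq_mul_units_of_eq {g h : ι → R} {u : Rˣ} (hu : g = fun i => h i * u) :
    #{w : Rˣ | g = fun i => h i * w} = #{w : Rˣ | h = fun i => h i * w} := by
  subst hu
  refine card_nbij' (· * u⁻¹) (· * u) ?_ ?_ (fun w _ => by simp) (fun w _ => by simp)
  · intro w hw
    simp only [coe_filter, mem_univ, true_and, funext_iff] at hw ⊢
    intro i
    rw [Units.val_mul, ← mul_assoc, ← hw i, Units.mul_inv_cancel_right]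
  · intro w hw
    simp only [coe_filter, mem_univ, true_and, funext_iff] at hw ⊢
    intro i
    rw [Units.val_mul, ← mul_assoc, ← hw i]

lemma card_image_mul_units_mul_card_filter (h : ι → R) :
    #(univ.image fun u : Rˣ => fun i => h i * u) * #{w : Rˣ | h = fun i => h i * w} =
      Fintype.card Rˣ := by
  rw [← card_univ, card_eq_sum_card_image (fun u : Rˣ => fun i => h i * u) univ]
  refine (sum_const_nat fun b hb => ?_).symm
  obtain ⟨u, -, rfl⟩ := mem_image.1 hb
  rw [← card_filter_eq_mul_units_of_eq (g := fun i => h i * u) rfl]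
  simp only [eq_comm]

lemma card_filter_eq_mul_units_eq_ite (g h : ι → R) :
    #{w : Rˣ | g = fun i => h i * w} =
      if {v : ι → R | ∃ t : R, v = fun i => g i * t} = {v | ∃ t : R, v = fun i => h i * t}
      then #{w : Rˣ | h = fun i => h i * w} else 0 := by
  split_ifs with H
  · obtain ⟨u, hu⟩ := setOf_mul_eq_iff.1 H
    exact card_filter_eq_mul_units_of_eq hu
  · rw [card_eq_zero, filter_eq_empty_iff]
    exact fun w _ hw => H (setOf_mul_eq_iff.2 ⟨w, hw⟩)

lemma sum_card_filter_eq_mul_units {κ : Type*} [Fintype κ] (c : κ → ι → R) (r : ℝ) (j' : κ)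
    (hmod : (#{j | {v : ι → R | ∃ t : R, v = fun i => c j i * t} =
        {v | ∃ t : R, v = fun i => c j' i * t}} : ℝ) =
      r * #(univ.image fun u : Rˣ => fun i => c j' i * u)) :
    ∑ j, (#{w : Rˣ | c j = fun i => c j' i * w} : ℝ) = r * Fintype.card Rˣ := by
  rw [sum_congr rfl fun j _ => congrArg Nat.cast (card_filter_eq_mul_units_eq_ite (c j) (c j'))]
  simp only [Nat.cast_ite, Nat.cast_zero, sum_ite, sum_const_zero, add_zero, sum_const,
    nsmul_eq_mul, hmod, ← card_image_mul_units_mul_card_filter (c j'), Nat.cast_mul]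
  ring

end UnitMultiples

section Characters

def AddChar.mulShiftRight {R M : Type*} [Ring R] [CommMonoid M] (ψ : AddChar R M) (b : R) :
    AddChar R M :=
  ψ.compAddMonoidHom (AddMonoidHom.mulRight b)

@[simp] lemma AddChar.mulShiftRight_apply {R M : Type*} [Ring R] [CommMonoid M]
    (ψ : AddChar R M) (b t : R) : ψ.mulShiftRight b t = ψ (t * b) := rfl

lemma AddChar.map_sub_eq_one_of_eq {A M : Type*} [AddGroup A] [Monoid M] {ψ : AddChar A M}
    {x y : A} (h : ψ x = ψ y) : ψ (x - y) = 1 := by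
  rw [sub_eq_add_neg, AddChar.map_add_eq_mul, h, ← AddChar.map_add_eq_mul, add_neg_cancel,
    AddChar.map_zero_eq_one]

lemma AddChar.map_sum_eq_prod {ι A M : Type*} [AddCommMonoid A] [CommMonoid M]
    (ψ : AddChar A M) (s : Finset ι) (f : ι → A) : ψ (∑ i ∈ s, f i) = ∏ i ∈ s, ψ (f i) :=
  map_prod ψ.toMonoidHom (fun i => Multiplicative.ofAdd (f i)) s

lemma dotProduct_mul_right {ι R : Type*} [Fintype ι] [NonUnitalSemiring R] (x g : ι → R)
    (u : R) : x ⬝ᵥ (fun i => g i * u) = x ⬝ᵥ g * u := by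
  simp only [dotProduct, sum_mul, mul_assoc]

end Characters

namespace IsGenChar

variable {R : Type} [Ring R] [Fintype R] {χ : AddChar R ℂ} {ι : Type*} [Fintype ι]

lemma eq_zero_of_forall_mul_left (hχ : IsGenChar χ) {a : R} (h : ∀ t, χ (t * a) = 1) :
    a = 0 := by
  by_contra ha
  obtain ⟨x, hx, hx1⟩ := hχ (Ideal.span {a}) (by rwa [Ne, Ideal.span_singleton_eq_bot])
  obtain ⟨t, rfl⟩ := Ideal.mem_span_singleton'.1 hx
  exact hx1 (h t)

lemma mulShiftRight_injective (hχ : IsGenChar χ) : Injective χ.mulShiftRight :=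
  fun a a' h => sub_eq_zero.1 <| hχ.eq_zero_of_forall_mul_left fun t => by
    rw [mul_sub]; exact AddChar.map_sub_eq_one_of_eq (DFunLike.congr_fun h t)

lemma mulShiftRight_bijective (hχ : IsGenChar χ) : Bijective χ.mulShiftRight :=
  (Fintype.bijective_iff_injective_and_card _).2
    ⟨hχ.mulShiftRight_injective, AddChar.card_eq.symm⟩

/-- Every character of `R` has the form `t ↦ χ (t * a)`, and characters separate points. -/
lemma eq_zero_of_forall_mul_right (hχ : IsGenChar χ) {c : R} (h : ∀ t, χ (c * t) = 1) :
    c = 0 := by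
  rw [← AddChar.forall_apply_eq_zero]
  intro ψ
  obtain ⟨a, rfl⟩ := hχ.mulShiftRight_bijective.2 ψ
  exact h a

lemma mulShift_bijective (hχ : IsGenChar χ) : Bijective χ.mulShift := by
  refine (Fintype.bijective_iff_injective_and_card _).2 ⟨fun c c' h => ?_, AddChar.card_eq.symm⟩
  exact sub_eq_zero.1 <| hχ.eq_zero_of_forall_mul_right fun t => by
    rw [sub_mul]; exact AddChar.map_sub_eq_one_of_eq (DFunLike.congr_fun h t)

noncomputable def nakayamaEquiv (hχ : IsGenChar χ) : R ≃ R :=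
  (Equiv.ofBijective _ hχ.mulShiftRight_bijective).trans
    (Equiv.ofBijective _ hχ.mulShift_bijective).symm

lemma nakayamaEquiv_spec (hχ : IsGenChar χ) (b t : R) :
    χ (hχ.nakayamaEquiv b * t) = χ (t * b) :=
  DFunLike.congr_fun ((Equiv.ofBijective _ hχ.mulShift_bijective).apply_symm_apply
    (χ.mulShiftRight b)) t

noncomputable def nakayama (hχ : IsGenChar χ) : R ≃* R :=
  MulEquiv.mk' hχ.nakayamaEquiv fun b b' => hχ.mulShift_bijective.1 <| by
    ext t
    simp only [AddChar.mulShift_apply, mul_assoc, nakayamaEquiv_spec]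

lemma sum_units_mul_comm (hχ : IsGenChar χ) (y : R) :
    ∑ u : Rˣ, χ (u * y) = ∑ u : Rˣ, χ (y * u) :=
  (Fintype.sum_equiv (Units.mapEquiv hχ.nakayama).toEquiv _ _ fun u =>
    (hχ.nakayamaEquiv_spec u y).symm).symm

lemma sum_mul_left_eq_ite (hχ : IsGenChar χ) (c : R) :
    ∑ t, χ (t * c) = if c = 0 then (Fintype.card R : ℂ) else 0 := by
  split_ifs with hc
  · simp [hc]
  · exact AddChar.sum_eq_zero_iff_ne_zero.2 fun h =>
      hc (hχ.eq_zero_of_forall_mul_left ((AddChar.eq_zero_iff (ψ := χ.mulShiftRight c)).1 h))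

lemma sum_dotProduct_eq_ite [DecidableEq ι] (hχ : IsGenChar χ) (c : ι → R) :
    ∑ x : ι → R, χ (x ⬝ᵥ c) = if c = 0 then (Fintype.card R : ℂ) ^ Fintype.card ι else 0 := by
  simp_rw [dotProduct, AddChar.map_sum_eq_prod]
  rw [← Fintype.prod_sum (fun i t => χ (t * c i))]
  simp_rw [hχ.sum_mul_left_eq_ite, Fintype.prod_ite_zero, prod_const, card_univ, funext_iff,
    Pi.zero_apply]

lemma conj_sum_units_mul (y : R) :
    starRingEnd ℂ (∑ u : Rˣ, χ (y * u)) = ∑ u : Rˣ, χ (y * u) := by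
  rw [map_sum]
  exact Fintype.sum_equiv (Equiv.neg Rˣ) _ _ fun u => by
    rw [Equiv.neg_apply, Units.val_neg, mul_neg, AddChar.map_neg_eq_conj]

lemma ofReal_whomR (hχ : IsGenChar χ) (y : R) :
    (whomR χ y : ℂ) = 1 - (Fintype.card Rˣ : ℂ)⁻¹ * ∑ u : Rˣ, χ (y * u) := by
  rw [whomR, hχ.sum_units_mul_comm, ← Complex.conj_eq_iff_re, map_sub, map_mul,
    conj_sum_units_mul, map_one, map_inv₀, map_natCast]

lemma sum_sum_units_dotProduct_add [DecidableEq ι] (hχ : IsGenChar χ) {g : ι → R} (hg : g ≠ 0)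
    (s : R) : ∑ x : ι → R, ∑ u : Rˣ, χ ((x ⬝ᵥ g + s) * u) = 0 := by
  rw [sum_comm]
  refine sum_eq_zero fun u _ => ?_
  have hgu : (fun i => g i * u) ≠ 0 := fun h =>
    hg (funext fun i => (Units.mul_left_eq_zero u).1 (congrFun h i))
  simp_rw [add_mul, AddChar.map_add_eq_mul, ← dotProduct_mul_right, ← sum_mul,
    hχ.sum_dotProduct_eq_ite, if_neg hgu, zero_mul]

lemma sum_mul_sum_units [DecidableEq ι] (hχ : IsGenChar χ) (g h : ι → R) (s : R) :
    ∑ x : ι → R, (∑ u : Rˣ, χ (x ⬝ᵥ g * u)) * ∑ v : Rˣ, χ ((x ⬝ᵥ h + s) * v) =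
      (Fintype.card R : ℂ) ^ Fintype.card ι * #{w : Rˣ | g = fun i => h i * w} *
        ∑ v : Rˣ, χ (s * v) := by
  have hpt (x : ι → R) (u v : Rˣ) : χ (x ⬝ᵥ g * u) * χ ((x ⬝ᵥ h + s) * v) =
      χ (s * v) * χ (x ⬝ᵥ fun i => g i * u + h i * v) := by
    rw [← AddChar.map_add_eq_mul, ← AddChar.map_add_eq_mul]
    congr 1
    simp only [dotProduct, mul_add, add_mul, sum_add_distrib, sum_mul, mul_assoc]
    abel
  calc ∑ x : ι → R, (∑ u : Rˣ, χ (x ⬝ᵥ g * u)) * ∑ v : Rˣ, χ ((x ⬝ᵥ h + s) * v)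
      = ∑ u : Rˣ, ∑ v : Rˣ, χ (s * v) * ∑ x : ι → R, χ (x ⬝ᵥ fun i => g i * u + h i * v) := by
        simp_rw [sum_mul_sum, hpt, mul_sum]
        rw [sum_comm]
        exact sum_congr rfl fun u _ => sum_comm
    _ = ∑ v : Rˣ, χ (s * v) * ((Fintype.card R : ℂ) ^ Fintype.card ι *
          #{u : Rˣ | (fun i => g i * u + h i * v) = 0}) := by
        simp_rw [hχ.sum_dotProduct_eq_ite]
        rw [sum_comm]
        refine sum_congr rfl fun v _ => ?_
        rw [← mul_sum, sum_ite, sum_const_zero, add_zero, sum_const, nsmul_eq_mul,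
          mul_comm (_ : ℂ) (_ ^ _)]
    _ = _ := by
        simp_rw [card_filter_mul_add_mul_eq_zero, ← sum_mul]
        ring

theorem sum_whomR_mul_whomR [DecidableEq ι] (hχ : IsGenChar χ) {g h : ι → R} (hg : g ≠ 0)
    (hh : h ≠ 0) (s : R) :
    ∑ x : ι → R, whomR χ (x ⬝ᵥ g) * whomR χ (x ⬝ᵥ h + s) =
      Fintype.card R ^ Fintype.card ι *
        (1 + #{w : Rˣ | g = fun i => h i * w} / Fintype.card Rˣ * (1 - whomR χ s)) := by
  have hq : (Fintype.card Rˣ : ℂ) ≠ 0 := Nat.cast_ne_zero.2 Fintype.card_ne_zero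
  have hg0 := hχ.sum_sum_units_dotProduct_add hg 0
  simp only [add_zero] at hg0
  apply Complex.ofReal_injective
  push_cast
  simp_rw [hχ.ofReal_whomR, sub_mul, one_mul, mul_sub, mul_one, sum_sub_distrib, ← mul_sum,
    sum_const, card_univ, Fintype.card_fun, hg0, hχ.sum_sum_units_dotProduct_add hh s,
    mul_mul_mul_comm (Fintype.card Rˣ : ℂ)⁻¹, ← mul_sum, hχ.sum_mul_sum_units g h s,
    nsmul_eq_mul]
  push_cast
  field_simp
  ring

theorem sum_whomV_vecMul_mul_whomV [DecidableEq ι] (hχ : IsGenChar χ) {n : ℕ}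
    (G : Matrix ι (Fin n) R) (r : ℝ) (hG : ∀ j, (fun i => G i j) ≠ 0)
    (hcount : ∀ j', ∑ j, (#{w : Rˣ | (fun i => G i j) = fun i => G i j' * w} : ℝ) =
      r * Fintype.card Rˣ)
    (d : Fin n → R) :
    ∑ x : ι → R, whomV χ (x ᵥ* G) * whomV χ (x ᵥ* G + d) =
      Fintype.card R ^ Fintype.card ι * (n ^ 2 + r * n - r * whomV χ d) := by
  have hq : (Fintype.card Rˣ : ℝ) ≠ 0 := Nat.cast_ne_zero.2 Fintype.card_ne_zero
  calc ∑ x : ι → R, whomV χ (x ᵥ* G) * whomV χ (x ᵥ* G + d)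
      = ∑ j', ∑ j, ∑ x : ι → R,
          whomR χ (x ⬝ᵥ fun i => G i j) * whomR χ (x ⬝ᵥ (fun i => G i j') + d j') := by
        have hcol (x : ι → R) (j : Fin n) : (x ᵥ* G) j = x ⬝ᵥ fun i => G i j := rfl
        simp_rw [whomV, Pi.add_apply, hcol, sum_mul_sum]
        rw [sum_comm, sum_congr rfl fun y _ => sum_comm, sum_comm]
    _ = ∑ j', (Fintype.card R : ℝ) ^ Fintype.card ι * (n + r * (1 - whomR χ (d j'))) := by
        refine sum_congr rfl fun j' _ => ?_
        simp_rw [hχ.sum_whomR_mul_whomR (hG _) (hG j'), ← mul_sum, sum_add_distrib, ← sum_mul,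
          ← sum_div, hcount, sum_const, card_univ, Fintype.card_fin, nsmul_eq_mul]
        rw [mul_div_cancel_right₀ _ hq, mul_one]
    _ = _ := by
        rw [← mul_sum, sum_add_distrib, ← mul_sum, sum_sub_distrib, whomV]
        simp only [sum_const, card_univ, Fintype.card_fin, nsmul_eq_mul, mul_one]
        ring

end IsGenChar

lemma AddMonoidHom.card_nsmul_sum_image {G M β : Type*} [AddGroup G] [Fintype G] [AddMonoid M]
    [DecidableEq M] [AddCommMonoid β] (f : G →+ M) (φ : M → β) :
    Fintype.card G • ∑ c ∈ univ.image f, φ c = #(univ.image f) • ∑ x, φ (f x) := by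
  have hfib (c) (hc : c ∈ univ.image f) : #{x | f x = c} = #{x | f x = 0} :=
    AddMonoidHom.card_fiber_eq_of_mem_range f (by simpa using hc) ⟨0, map_zero f⟩
  have hcard : Fintype.card G = #(univ.image f) * #{x | f x = 0} := by
    rw [← card_univ, card_eq_sum_card_image f univ, sum_congr rfl hfib, sum_const, smul_eq_mul]
  have hsum : ∑ x, φ (f x) = #{x | f x = 0} • ∑ c ∈ univ.image f, φ c := by
    rw [sum_comp, smul_sum]
    exact sum_congr rfl fun c hc => by rw [hfib c hc]
  rw [hcard, hsum, mul_smul]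

/-- For a modular linear code `C ≤ R^n` of index `r` over a finite Frobenius
ring, generated by the columns of `G ∈ R^{k×n}`, and any `d ∈ R^n`:
`Σ_{c∈C} w_hom(c)·w_hom(c+d) = |C|·(n² + rn − r·w_hom(d))`. -/
theorem modular_correlation {R : Type} [Ring R] [Fintype R]
    (χ : AddChar R ℂ) (hχ : IsGenChar χ)
    (k n : ℕ) (G : Matrix (Fin k) (Fin n) R) (r : ℝ)
    (hcolnz : ∀ j, (fun i => G i j) ≠ (0 : Fin k → R))
    (hmod : ∀ j, ((Finset.univ.filter (fun j' =>
          {v : Fin k → R | ∃ t : R, v = fun i => G i j' * t} =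
          {v : Fin k → R | ∃ t : R, v = fun i => G i j * t})).card : ℝ) =
        r * ((Finset.image (fun u : Rˣ => fun i => G i j * (u : R))
                (Finset.univ : Finset Rˣ)).card : ℝ))
    (C : Finset (Fin n → R))
    (hC : C = Finset.image (fun x : Fin k → R => fun j => ∑ i, x i * G i j)
                Finset.univ)
    (d : Fin n → R) :
    ∑ c ∈ C, whomV χ c * whomV χ (c + d) =
      (C.card : ℝ) * ((n : ℝ) ^ 2 + r * n - r * whomV χ d) := by
  let f : (Fin k → R) →+ (Fin n → R) :=
    AddMonoidHom.mk' (· ᵥ* G) fun x y => Matrix.add_vecMul G x y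
  have hsum : ∑ x, whomV χ (x ᵥ* G) * whomV χ (x ᵥ* G + d) =
      Fintype.card R ^ k * ((n : ℝ) ^ 2 + r * n - r * whomV χ d) := by
    simpa only [Fintype.card_fin] using hχ.sum_whomV_vecMul_mul_whomV G r hcolnz
      (fun j' => sum_card_filter_eq_mul_units (fun j i => G i j) r j' (hmod j')) d
  have hfib := f.card_nsmul_sum_image fun c => whomV χ c * whomV χ (c + d)
  rw [← show C = univ.image f from hC] at hfib
  change _ = _ • ∑ x, whomV χ (x ᵥ* G) * whomV χ (x ᵥ* G + d) at hfib
  rw [hsum, Fintype.card_fun, Fintype.card_fin, nsmul_eq_mul, nsmul_eq_mul, Nat.cast_pow] at hfib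
  have hpos : (Fintype.card R : ℝ) ^ k ≠ 0 :=
    pow_ne_zero _ (Nat.cast_ne_zero.2 Fintype.card_ne_zero)
  exact mul_left_cancel₀ hpos (hfib.trans (by ring))
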